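/- arXiv:1905.08928 — 4 statements merged into one kernel-verified Lean document; each statement's English description precedes it below -/
import Mathlib

section
/- If c > 0, λ ≥ 0 and −c ≤ x ≤ c, then e^{λx} ≤ (x/(2c))·(e^{λc} − e^{−λc}) + e^{(λc)²/2}. -/
open Real Set

theorem ConvexOn.le_chord_of_mem_Icc_neg {f : ℝ → ℝ} {c x : ℝ} (hf : ConvexOn ℝ (Icc (-c) c) f)
    (hc : 0 < c) (hx : x ∈ Icc (-c) c) :
    f x ≤ (c - x) / (2 * c) * f (-c) + (x + c) / (2 * c) * f c := by
  have hc' : -c ≤ c := by linarith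
  have hpt : (c - x) / (2 * c) * -c + (x + c) / (2 * c) * c = x := by
    field_simp; ring
  have hwl : 0 ≤ (c - x) / (2 * c) := div_nonneg (by linarith [hx.2]) (by linarith)
  have hwr : 0 ≤ (x + c) / (2 * c) := div_nonneg (by linarith [hx.1]) (by linarith)
  have hw : (c - x) / (2 * c) + (x + c) / (2 * c) = 1 := by field_simp; ring
  have hchord := hf.2 (left_mem_Icc.2 hc') (right_mem_Icc.2 hc') hwl hwr hw
  simpa only [smul_eq_mul, hpt] using hchord

theorem convexOn_exp_const_mul (lam : ℝ) : ConvexOn ℝ univ fun t => exp (lam * t) :=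
  convexOn_exp.comp_linearMap (LinearMap.mulLeft ℝ lam)

theorem exp_convexity_bound_general (c lam x : ℝ) (hc : 0 < c)
    (hx1 : -c ≤ x) (hx2 : x ≤ c) :
    Real.exp (lam * x) ≤
      x / (2 * c) * (Real.exp (lam * c) - Real.exp (-(lam * c))) +
        Real.exp ((lam * c) ^ 2 / 2) := by
  have hchord := ((convexOn_exp_const_mul lam).subset (subset_univ _) (convex_Icc _ _)
    ).le_chord_of_mem_Icc_neg hc ⟨hx1, hx2⟩
  have hcosh := cosh_le_exp_half_sq (lam * c)
  calc exp (lam * x)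
      ≤ (c - x) / (2 * c) * exp (-(lam * c)) + (x + c) / (2 * c) * exp (lam * c) := by
        simpa only [mul_neg] using hchord
    _ = x / (2 * c) * (exp (lam * c) - exp (-(lam * c))) + cosh (lam * c) := by
        rw [cosh_eq]; field_simp; ring
    _ ≤ _ := by gcongr

theorem exp_convexity_bound (c lam x : ℝ) (hc : 0 < c) (hlam : 0 ≤ lam)
    (hx1 : -c ≤ x) (hx2 : x ≤ c) :
    Real.exp (lam * x) ≤
      x / (2 * c) * (Real.exp (lam * c) - Real.exp (-(lam * c))) +
        Real.exp ((lam * c) ^ 2 / 2) :=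
  exp_convexity_bound_general c lam x hc hx1 hx2
end

section
/- Let X be a random variable and F a sub-σ-field with E(X | F) = 0 and |X| ≤ c almost surely, and let λ ≥ 0. Then E(e^{λX} | F) ≤ e^{(λc)²/2} almost surely. -/
/-!
On `[-c, c]` the convex function `x ↦ exp (λx)` lies below its chord, the affine function
`cosh (λc) + (sinh (λc) / c) x`. Conditioning the chord on `F` kills the linear term because
`E(X | F) = 0`, leaving `cosh (λc) ≤ exp ((λc)² / 2)`.
-/

open MeasureTheory Real

lemma Real.exp_mul_le_cosh_add_mul_of_abs_le {c x lam : ℝ} (hc : 0 < c) (hx : |x| ≤ c) :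
    exp (lam * x) ≤ cosh (lam * c) + sinh (lam * c) / c * x := by
  obtain ⟨hx_lower, hx_upper⟩ := abs_le.mp hx
  set p : ℝ := (c - x) / (2 * c) with hp_def
  set q : ℝ := (c + x) / (2 * c) with hq_def
  have hp : 0 ≤ p := div_nonneg (by linarith) (by linarith)
  have hq : 0 ≤ q := div_nonneg (by linarith) (by linarith)
  have hpq : p + q = 1 := by rw [hp_def, hq_def]; field_simp; ring
  have hconvex := convexOn_exp.2 (Set.mem_univ (-(lam * c))) (Set.mem_univ (lam * c)) hp hq hpq
  have hchord : p * -(lam * c) + q * (lam * c) = lam * x := by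
    rw [hp_def, hq_def]; field_simp; ring
  simp only [smul_eq_mul, hchord] at hconvex
  calc exp (lam * x) ≤ p * exp (-(lam * c)) + q * exp (lam * c) := hconvex
    _ = cosh (lam * c) + sinh (lam * c) / c * x := by
      rw [cosh_eq, sinh_eq, hp_def, hq_def]
      field_simp
      ring

lemma MeasureTheory.condExp_le_of_ae_le_const_add_mul {Ω : Type*} {m m0 : MeasurableSpace Ω}
    {μ : Measure Ω} [IsFiniteMeasure μ] (hm : m ≤ m0) {X Y : Ω → ℝ} (hX : Integrable X μ)
    (hY : Integrable Y μ) (hX_cond : μ[X | m] =ᵐ[μ] 0) {a b : ℝ}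
    (hYX : Y ≤ᵐ[μ] fun ω => a + b * X ω) :
    μ[Y | m] ≤ᵐ[μ] fun _ => a := by
  have hmono : μ[Y | m] ≤ᵐ[μ] μ[fun ω => a + b * X ω | m] :=
    condExp_mono hY ((integrable_const a).add (hX.const_mul b)) hYX
  have hadd : μ[fun ω => a + b * X ω | m] =ᵐ[μ] μ[fun _ => a | m] + μ[b • X | m] :=
    condExp_add (integrable_const a) (hX.const_mul b) m
  filter_upwards [hmono, hadd, condExp_smul b X m, hX_cond] with ω hmono hadd hsmul hzero
  simpa [hadd, hsmul, hzero, condExp_const hm] using hmono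

theorem conditional_hoeffding_general {Ω : Type*} {m0 : MeasurableSpace Ω} {μ : Measure Ω}
    [IsProbabilityMeasure μ] (m' : MeasurableSpace Ω) (hm' : m' ≤ m0)
    (X : Ω → ℝ) (hint : Integrable X μ)
    (c : ℝ) (hc : 0 < c) (lam : ℝ)
    (hcond : μ[X | m'] =ᵐ[μ] 0)
    (hbdd : ∀ᵐ ω ∂μ, |X ω| ≤ c) :
    ∀ᵐ ω ∂μ, (μ[fun ω' => Real.exp (lam * X ω') | m']) ω ≤ Real.exp ((lam * c) ^ 2 / 2) := by
  have hchord : (fun ω => exp (lam * X ω)) ≤ᵐ[μ]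
      fun ω => cosh (lam * c) + sinh (lam * c) / c * X ω :=
    hbdd.mono fun ω hω => exp_mul_le_cosh_add_mul_of_abs_le hc hω
  have hexp_int : Integrable (fun ω => exp (lam * X ω)) μ :=
    ((integrable_const _).add (hint.const_mul _)).mono'
      (continuous_exp.comp_aestronglyMeasurable (hint.aestronglyMeasurable.const_mul lam))
      (hchord.mono fun ω hω => by rwa [norm_of_nonneg (exp_pos _).le])
  filter_upwards [condExp_le_of_ae_le_const_add_mul hm' hint hexp_int hcond hchord] with ω hω
  exact hω.trans (cosh_le_exp_half_sq _)

theorem conditional_hoeffding {Ω : Type*} {m0 : MeasurableSpace Ω} {μ : Measure Ω}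
    [IsProbabilityMeasure μ] (m' : MeasurableSpace Ω) (hm' : m' ≤ m0)
    (X : Ω → ℝ) (hint : Integrable X μ)
    (c : ℝ) (hc : 0 < c) (lam : ℝ) (hlam : 0 ≤ lam)
    (hcond : μ[X | m'] =ᵐ[μ] 0)
    (hbdd : ∀ᵐ ω ∂μ, |X ω| ≤ c) :
    ∀ᵐ ω ∂μ, (μ[fun ω' => Real.exp (lam * X ω') | m']) ω ≤ Real.exp ((lam * c) ^ 2 / 2) :=
  conditional_hoeffding_general m' hm' X hint c hc lam hcond hbdd
end

section
/- Let (M_i)_{0 ≤ i ≤ m} be a martingale with M_0 = 0, increments bounded by |M_{i+1} − M_i| ≤ 2β, and conditional variances Var(M_{i+1} − M_i | F_i) ≤ βb. Then for all t ≥ 0, P(max_{0 ≤ j ≤ m} |M_j| ≥ t) ≤ 2·e^{−t²/(2mβb + 2βt)}. -/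
open MeasureTheory Real

/-!
Bernstein's exponential method. From the Padé bound `(2 - x) eˣ ≤ 2 + x` (for `x ≥ 0`) one gets
`eˣ ≤ 1 + x + x² / (2 - u)` whenever `x ≤ u` and `0 ≤ u < 2`. Applied to `x = λ (M (i+1) - M i)`
with `u = 2βλ`, it bounds the conditional moment generating function of each increment by
`exp (λ² β b / (2 - 2βλ))`, while conditional Jensen bounds it below by `1`. Hence
`exp (λ M (j ⊓ m))` is a nonnegative submartingale with expectation at most
`exp (m λ² β b / (2 - 2βλ))` at time `m`, and Doob's maximal inequality bounds
`P (max_{j ≤ m} M j ≥ t)` by this divided by `exp (λ t)`. The choice `λ = t / (m β b + β t)` makes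
the exponent exactly `-t² / (2 m β b + 2 β t)`; applying the same bound to `-M` gives the factor 2.
-/

lemma exp_le_one_add_add_sq_div_two_of_nonpos {x : ℝ} (hx : x ≤ 0) :
    exp x ≤ 1 + x + x ^ 2 / 2 := by
  have hmono : Monotone fun y : ℝ => exp y - (1 + y + y ^ 2 / 2) := by
    refine monotone_of_deriv_nonneg (by fun_prop) fun y => ?_
    have hderiv : HasDerivAt (fun y : ℝ => exp y - (1 + y + y ^ 2 / 2)) (exp y - (1 + y)) y :=
      ((hasDerivAt_exp y).sub (((hasDerivAt_id' y).const_add 1).add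
        ((hasDerivAt_pow 2 y).div_const 2))).congr_deriv (by norm_num)
    rw [hderiv.deriv]
    linarith [add_one_le_exp y]
  simpa using hmono hx

lemma two_sub_mul_exp_le {x : ℝ} (hx : 0 ≤ x) : (2 - x) * exp x ≤ 2 + x := by
  have hanti : Antitone fun y : ℝ => (2 - y) * exp y - (2 + y) := by
    refine antitone_of_deriv_nonpos (by fun_prop) fun y => ?_
    have hderiv : HasDerivAt (fun y : ℝ => (2 - y) * exp y - (2 + y)) ((1 - y) * exp y - 1) y :=
      ((((hasDerivAt_id' y).const_sub 2).mul (hasDerivAt_exp y)).sub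
        ((hasDerivAt_id' y).const_add 2)).congr_deriv (by ring)
    rw [hderiv.deriv, sub_nonpos]
    calc (1 - y) * exp y ≤ exp (-y) * exp y := by
          gcongr; linarith [add_one_le_exp (-y)]
      _ = 1 := by rw [← exp_add, neg_add_cancel, exp_zero]
  simpa using hanti hx

lemma exp_le_one_add_add_sq_div_two_sub {x u : ℝ} (hxu : x ≤ u) (hu0 : 0 ≤ u) (hu2 : u < 2) :
    exp x ≤ 1 + x + x ^ 2 / (2 - u) := by
  rcases le_total x 0 with hx | hx
  · calc exp x ≤ 1 + x + x ^ 2 / 2 := exp_le_one_add_add_sq_div_two_of_nonpos hx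
      _ ≤ 1 + x + x ^ 2 / (2 - u) := by gcongr; linarith
  · have hpade : exp x - 1 - x ≤ x ^ 2 / (2 - x) := by
      rw [le_div_iff₀ (by linarith)]
      linarith [two_sub_mul_exp_le hx]
    calc exp x = 1 + x + (exp x - 1 - x) := by ring
      _ ≤ 1 + x + x ^ 2 / (2 - u) := by
        gcongr
        exact hpade.trans (by gcongr)

section ConditionalExponentialMoments

variable {Ω : Type*} {m0 : MeasurableSpace Ω} {μ : Measure Ω} {D : Ω → ℝ} {c l : ℝ}

lemma memLp_top_exp_mul (hD : AEStronglyMeasurable D μ) (hl : 0 ≤ l)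
    (hDc : ∀ᵐ ω ∂μ, |D ω| ≤ c) : MemLp (fun ω => exp (l * D ω)) ⊤ μ := by
  refine memLp_top_of_bound (continuous_exp.comp_aestronglyMeasurable (hD.const_mul l))
    (exp (l * c)) ?_
  filter_upwards [hDc] with ω hω
  rw [Real.norm_eq_abs, abs_exp]
  exact exp_le_exp.2 (mul_le_mul_of_nonneg_left ((le_abs_self _).trans hω) hl)

lemma condExp_exp_mul_le [IsProbabilityMeasure μ] {m : MeasurableSpace Ω} (hm : m ≤ m0)
    {σ2 : ℝ} (hD : Integrable D μ) (hDc : ∀ᵐ ω ∂μ, |D ω| ≤ c) (hmean : μ[D|m] =ᵐ[μ] 0)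
    (hvar : ∀ᵐ ω ∂μ, μ[fun ω => D ω ^ 2|m] ω ≤ σ2) (hl : 0 ≤ l) (hlc : l * c < 2) :
    μ[fun ω => exp (l * D ω)|m] ≤ᵐ[μ] fun _ => exp (l ^ 2 * σ2 / (2 - l * c)) := by
  obtain ⟨ω₀, hω₀⟩ := hDc.exists
  have hlc₀ : 0 ≤ l * c := mul_nonneg hl ((abs_nonneg _).trans hω₀)
  set k := l ^ 2 / (2 - l * c)
  have hk : 0 ≤ k := div_nonneg (sq_nonneg l) (by linarith)
  have hD2 : Integrable (fun ω => D ω ^ 2) μ := by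
    refine (integrable_const (c ^ 2)).mono' (hD.aestronglyMeasurable.pow 2) ?_
    filter_upwards [hDc] with ω hω
    rw [norm_pow, Real.norm_eq_abs]
    exact pow_le_pow_left₀ (abs_nonneg _) hω 2
  have hquad : (fun ω => exp (l * D ω)) ≤ᵐ[μ] fun ω => 1 + l * D ω + k * D ω ^ 2 := by
    filter_upwards [hDc] with ω hω
    have := exp_le_one_add_add_sq_div_two_sub
      (mul_le_mul_of_nonneg_left ((le_abs_self _).trans hω) hl) hlc₀ hlc
    convert this using 2
    ring
  have hlin : μ[fun ω => 1 + l * D ω + k * D ω ^ 2|m]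
      =ᵐ[μ] fun ω => 1 + l * μ[D|m] ω + k * μ[fun ω => D ω ^ 2|m] ω := by
    filter_upwards [condExp_add ((integrable_const 1).add (hD.smul l)) (hD2.smul k) m,
      condExp_add (integrable_const 1) (hD.smul l) m, condExp_smul l D m,
      condExp_smul k (fun ω => D ω ^ 2) m] with ω h1 h2 h3 h4
    change μ[((fun _ => 1) + l • D) + k • fun ω => D ω ^ 2|m] ω = _
    rw [h1, Pi.add_apply, h2, Pi.add_apply, h3, h4, condExp_const hm]
    rfl
  have hexp_int : Integrable (fun ω => exp (l * D ω)) μ :=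
    (memLp_top_exp_mul hD.aestronglyMeasurable hl hDc).integrable le_top
  have hquad_int : Integrable (fun ω => 1 + l * D ω + k * D ω ^ 2) μ :=
    ((integrable_const 1).add (hD.const_mul l)).add (hD2.const_mul k)
  filter_upwards [condExp_mono (m := m) hexp_int hquad_int hquad, hlin, hmean, hvar]
    with ω h1 h2 h3 h4
  rw [h2, h3, Pi.zero_apply, mul_zero, add_zero] at h1
  calc _ ≤ 1 + k * σ2 := h1.trans (by gcongr)
    _ ≤ exp (k * σ2) := by linarith [add_one_le_exp (k * σ2)]
    _ = _ := by rw [mul_div_right_comm]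

lemma one_le_condExp_exp_mul [IsFiniteMeasure μ] {m : MeasurableSpace Ω} (hm : m ≤ m0)
    (hD : Integrable D μ) (hexp : Integrable (fun ω => exp (l * D ω)) μ)
    (hmean : μ[D|m] =ᵐ[μ] 0) :
    (fun _ => 1) ≤ᵐ[μ] μ[fun ω => exp (l * D ω)|m] := by
  filter_upwards [convexOn_exp.map_condExp_le_univ hm continuous_exp.lowerSemicontinuous
    (hD.const_mul l) hexp, condExp_smul l D m, hmean] with ω hjensen h2 h3
  change exp (μ[l • D|m] ω) ≤ _ at hjensen
  rwa [h2, Pi.smul_apply, h3, Pi.zero_apply, smul_zero, exp_zero] at hjensen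

end ConditionalExponentialMoments

section Martingale

variable {Ω : Type*} {m0 : MeasurableSpace Ω} {μ : Measure Ω} {ℱ : Filtration ℕ m0}

lemma measure_exists_le_le_of_submartingale [IsFiniteMeasure μ] {Z : ℕ → Ω → ℝ}
    (hsub : Submartingale Z ℱ μ) (hnonneg : 0 ≤ Z) {ε : ℝ} (hε : 0 < ε) (n : ℕ) :
    μ {ω | ∃ j ≤ n, ε ≤ Z j ω} ≤ ENNReal.ofReal ((∫ ω, Z n ω ∂μ) / ε) := by
  lift ε to NNReal using hε.le
  have hsup : {ω | ∃ j ≤ n, (ε : ℝ) ≤ Z j ω} ⊆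
      {ω | (ε : ℝ) ≤ (Finset.range (n + 1)).sup' Finset.nonempty_range_add_one fun k => Z k ω} := by
    rintro ω ⟨j, hj, hjε⟩
    exact hjε.trans (Finset.le_sup' (fun k => Z k ω) (Finset.mem_range.2 (Nat.lt_succ_of_le hj)))
  rw [ENNReal.ofReal_div_of_pos hε, ENNReal.le_div_iff_mul_le (Or.inl (by simpa using hε.ne'))
    (by simp), ENNReal.ofReal_coe_nnreal, mul_comm]
  calc (ε : ENNReal) * μ {ω | ∃ j ≤ n, (ε : ℝ) ≤ Z j ω} ≤ _ := by gcongr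
    _ ≤ _ := maximal_ineq hsub hnonneg n
    _ ≤ _ := ENNReal.ofReal_le_ofReal (setIntegral_le_integral (hsub.integrable n)
      (Filter.Eventually.of_forall (hnonneg n)))

lemma integral_le_pow_mul_of_condExp_le [SigmaFiniteFiltration μ ℱ] {Z : ℕ → Ω → ℝ} {a : ℝ} {N : ℕ}
    (ha : 0 ≤ a) (hint : ∀ n, Integrable (Z n) μ)
    (hstep : ∀ n < N, μ[Z (n + 1)|ℱ n] ≤ᵐ[μ] fun ω => a * Z n ω) :
    ∀ n ≤ N, ∫ ω, Z n ω ∂μ ≤ a ^ n * ∫ ω, Z 0 ω ∂μ := by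
  intro n
  induction n with
  | zero => simp
  | succ n ih =>
    intro hn
    calc ∫ ω, Z (n + 1) ω ∂μ = ∫ ω, μ[Z (n + 1)|ℱ n] ω ∂μ := (integral_condExp (ℱ.le n)).symm
      _ ≤ ∫ ω, a * Z n ω ∂μ :=
        integral_mono_ae integrable_condExp ((hint n).const_mul a) (hstep n hn)
      _ = a * ∫ ω, Z n ω ∂μ := integral_const_mul a _
      _ ≤ a * (a ^ n * ∫ ω, Z 0 ω ∂μ) := by gcongr; exact ih (by omega)
      _ = a ^ (n + 1) * ∫ ω, Z 0 ω ∂μ := by ring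

lemma MeasureTheory.Martingale.condExp_sub_ae_eq_zero {M : ℕ → Ω → ℝ}
    (hmart : Martingale M ℱ μ) (n : ℕ) :
    μ[fun ω => M (n + 1) ω - M n ω|ℱ n] =ᵐ[μ] 0 := by
  filter_upwards [condExp_sub (hmart.integrable (n + 1)) (hmart.integrable n) (ℱ n),
    hmart.condExp_ae_eq n.le_succ, hmart.condExp_ae_eq le_rfl] with ω h1 h2 h3
  change μ[M (n + 1) - M n|ℱ n] ω = 0
  rw [h1, Pi.sub_apply, h2, h3, sub_self]

/-- Stopping at the deterministic time `m` makes this a submartingale at all times, not only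
where the hypotheses on the increments of `M` hold. -/
noncomputable def expStopped (M : ℕ → Ω → ℝ) (m : ℕ) (l : ℝ) (j : ℕ) (ω : Ω) : ℝ :=
  exp (l * M (min j m) ω)

variable {M : ℕ → Ω → ℝ} {m n : ℕ} {c σ2 l : ℝ}

lemma expStopped_zero (h0 : ∀ ω, M 0 ω = 0) : expStopped M m l 0 = 1 := by
  ext ω
  simp [expStopped, h0]

lemma expStopped_succ_of_lt (hn : n < m) :
    expStopped M m l (n + 1) = expStopped M m l n * fun ω => exp (l * (M (n + 1) ω - M n ω)) := by
  ext ω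
  simp only [expStopped, Pi.mul_apply, ← exp_add, min_eq_left (Nat.succ_le_of_lt hn),
    min_eq_left hn.le]
  congr 1
  ring

lemma expStopped_succ_of_le (hn : m ≤ n) : expStopped M m l (n + 1) = expStopped M m l n := by
  ext ω
  simp only [expStopped, min_eq_right hn, min_eq_right (hn.trans n.le_succ)]

lemma expStopped_nonneg : 0 ≤ expStopped M m l := fun _ _ => (exp_pos _).le

lemma MeasureTheory.StronglyAdapted.expStopped (hM : StronglyAdapted ℱ M) :
    StronglyAdapted ℱ (expStopped M m l) := fun j =>
  continuous_exp.comp_stronglyMeasurable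
    (((hM (min j m)).mono (ℱ.mono (min_le_left j m))).const_mul l)

lemma MeasureTheory.Martingale.memLp_top_exp_mul_sub (hmart : Martingale M ℱ μ)
    (hbdd : ∀ i < m, ∀ᵐ ω ∂μ, |M (i + 1) ω - M i ω| ≤ c) (hl : 0 ≤ l) (hn : n < m) :
    MemLp (fun ω => exp (l * (M (n + 1) ω - M n ω))) ⊤ μ :=
  memLp_top_exp_mul ((hmart.integrable (n + 1)).sub (hmart.integrable n)).aestronglyMeasurable
    hl (hbdd n hn)

lemma integrable_expStopped [IsFiniteMeasure μ] (hmart : Martingale M ℱ μ)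
    (h0 : ∀ ω, M 0 ω = 0) (hbdd : ∀ i < m, ∀ᵐ ω ∂μ, |M (i + 1) ω - M i ω| ≤ c) (hl : 0 ≤ l)
    (n : ℕ) : Integrable (expStopped M m l n) μ := by
  induction n with
  | zero => rw [expStopped_zero h0]; exact integrable_const 1
  | succ n ih =>
    rcases lt_or_ge n m with hn | hn
    · rw [expStopped_succ_of_lt hn]
      exact ih.mul_of_top_left (hmart.memLp_top_exp_mul_sub hbdd hl hn)
    · rwa [expStopped_succ_of_le hn]

lemma condExp_expStopped_succ_of_lt [IsFiniteMeasure μ] (hmart : Martingale M ℱ μ)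
    (h0 : ∀ ω, M 0 ω = 0) (hbdd : ∀ i < m, ∀ᵐ ω ∂μ, |M (i + 1) ω - M i ω| ≤ c) (hl : 0 ≤ l)
    (hn : n < m) :
    μ[expStopped M m l (n + 1)|ℱ n] =ᵐ[μ]
      expStopped M m l n * μ[fun ω => exp (l * (M (n + 1) ω - M n ω))|ℱ n] := by
  have hint := integrable_expStopped hmart h0 hbdd hl (n + 1)
  rw [expStopped_succ_of_lt hn] at hint ⊢
  exact condExp_mul_of_stronglyMeasurable_left (hmart.stronglyAdapted.expStopped n) hint
    ((hmart.memLp_top_exp_mul_sub hbdd hl hn).integrable le_top)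

lemma expStopped_le_condExp_succ [IsFiniteMeasure μ] (hmart : Martingale M ℱ μ)
    (h0 : ∀ ω, M 0 ω = 0) (hbdd : ∀ i < m, ∀ᵐ ω ∂μ, |M (i + 1) ω - M i ω| ≤ c) (hl : 0 ≤ l)
    (n : ℕ) : expStopped M m l n ≤ᵐ[μ] μ[expStopped M m l (n + 1)|ℱ n] := by
  rcases lt_or_ge n m with hn | hn
  · filter_upwards [condExp_expStopped_succ_of_lt hmart h0 hbdd hl hn,
      one_le_condExp_exp_mul (ℱ.le n) ((hmart.integrable (n + 1)).sub (hmart.integrable n))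
        ((hmart.memLp_top_exp_mul_sub hbdd hl hn).integrable le_top)
        (hmart.condExp_sub_ae_eq_zero n)] with ω hpull hone
    rw [hpull, Pi.mul_apply]
    exact le_mul_of_one_le_right (expStopped_nonneg n ω) hone
  · rw [expStopped_succ_of_le hn, condExp_of_stronglyMeasurable (ℱ.le n)
      (hmart.stronglyAdapted.expStopped n) (integrable_expStopped hmart h0 hbdd hl n)]

lemma condExp_expStopped_succ_le [IsProbabilityMeasure μ] (hmart : Martingale M ℱ μ)
    (h0 : ∀ ω, M 0 ω = 0) (hbdd : ∀ i < m, ∀ᵐ ω ∂μ, |M (i + 1) ω - M i ω| ≤ c)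
    (hvar : ∀ i < m, ∀ᵐ ω ∂μ, μ[fun ω' => (M (i + 1) ω' - M i ω') ^ 2|ℱ i] ω ≤ σ2)
    (hl : 0 ≤ l) (hlc : l * c < 2) (hn : n < m) :
    μ[expStopped M m l (n + 1)|ℱ n] ≤ᵐ[μ]
      fun ω => exp (l ^ 2 * σ2 / (2 - l * c)) * expStopped M m l n ω := by
  filter_upwards [condExp_expStopped_succ_of_lt hmart h0 hbdd hl hn,
    condExp_exp_mul_le (ℱ.le n) ((hmart.integrable (n + 1)).sub (hmart.integrable n))
      (hbdd n hn) (hmart.condExp_sub_ae_eq_zero n) (hvar n hn) hl hlc] with ω hpull hmgf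
  rw [hpull, Pi.mul_apply, mul_comm]
  exact mul_le_mul_of_nonneg_right hmgf (expStopped_nonneg n ω)

lemma measure_exists_le_le [IsProbabilityMeasure μ] (hmart : Martingale M ℱ μ)
    (h0 : ∀ ω, M 0 ω = 0) (hbdd : ∀ i < m, ∀ᵐ ω ∂μ, |M (i + 1) ω - M i ω| ≤ c)
    (hvar : ∀ i < m, ∀ᵐ ω ∂μ, μ[fun ω' => (M (i + 1) ω' - M i ω') ^ 2|ℱ i] ω ≤ σ2)
    (hl : 0 ≤ l) (hlc : l * c < 2) (t : ℝ) :
    μ {ω | ∃ j ≤ m, t ≤ M j ω}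
      ≤ ENNReal.ofReal (exp (m * (l ^ 2 * σ2 / (2 - l * c)) - l * t)) := by
  have hsub : Submartingale (expStopped M m l) ℱ μ :=
    submartingale_nat hmart.stronglyAdapted.expStopped (integrable_expStopped hmart h0 hbdd hl)
      (expStopped_le_condExp_succ hmart h0 hbdd hl)
  have hmoment : ∫ ω, expStopped M m l m ω ∂μ ≤ exp (m * (l ^ 2 * σ2 / (2 - l * c))) := by
    calc _ ≤ exp (l ^ 2 * σ2 / (2 - l * c)) ^ m * ∫ ω, expStopped M m l 0 ω ∂μ :=
          integral_le_pow_mul_of_condExp_le (exp_pos _).le (integrable_expStopped hmart h0 hbdd hl)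
            (fun n hn => condExp_expStopped_succ_le hmart h0 hbdd hvar hl hlc hn) m le_rfl
      _ = _ := by simp [expStopped_zero h0, ← exp_nat_mul]
  have hlevel : {ω | ∃ j ≤ m, t ≤ M j ω} ⊆ {ω | ∃ j ≤ m, exp (l * t) ≤ expStopped M m l j ω} := by
    rintro ω ⟨j, hj, hjt⟩
    exact ⟨j, hj, by rw [expStopped, min_eq_left hj]; gcongr⟩
  calc μ {ω | ∃ j ≤ m, t ≤ M j ω}
      ≤ ENNReal.ofReal ((∫ ω, expStopped M m l m ω ∂μ) / exp (l * t)) :=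
        (measure_mono hlevel).trans (measure_exists_le_le_of_submartingale hsub expStopped_nonneg
          (exp_pos _) m)
    _ ≤ _ := by
      rw [exp_sub]
      gcongr

lemma measure_exists_le_abs_le [IsProbabilityMeasure μ] (hmart : Martingale M ℱ μ)
    (h0 : ∀ ω, M 0 ω = 0) (hbdd : ∀ i < m, ∀ᵐ ω ∂μ, |M (i + 1) ω - M i ω| ≤ c)
    (hvar : ∀ i < m, ∀ᵐ ω ∂μ, μ[fun ω' => (M (i + 1) ω' - M i ω') ^ 2|ℱ i] ω ≤ σ2)
    (hl : 0 ≤ l) (hlc : l * c < 2) (t : ℝ) :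
    μ {ω | ∃ j ≤ m, t ≤ |M j ω|}
      ≤ ENNReal.ofReal (2 * exp (m * (l ^ 2 * σ2 / (2 - l * c)) - l * t)) := by
  have hbdd_neg : ∀ i < m, ∀ᵐ ω ∂μ, |(-M) (i + 1) ω - (-M) i ω| ≤ c := by
    simpa only [Pi.neg_apply, neg_sub_neg, abs_sub_comm] using hbdd
  have hvar_neg : ∀ i < m, ∀ᵐ ω ∂μ,
      μ[fun ω' => ((-M) (i + 1) ω' - (-M) i ω') ^ 2|ℱ i] ω ≤ σ2 := by
    simpa only [Pi.neg_apply, neg_sub_neg, sub_sq_comm] using hvar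
  have hsplit : {ω | ∃ j ≤ m, t ≤ |M j ω|} ⊆
      {ω | ∃ j ≤ m, t ≤ M j ω} ∪ {ω | ∃ j ≤ m, t ≤ (-M) j ω} := by
    rintro ω ⟨j, hj, hjt⟩
    rcases le_abs.1 hjt with h | h
    exacts [Or.inl ⟨j, hj, h⟩, Or.inr ⟨j, hj, h⟩]
  calc μ {ω | ∃ j ≤ m, t ≤ |M j ω|}
      ≤ μ {ω | ∃ j ≤ m, t ≤ M j ω} + μ {ω | ∃ j ≤ m, t ≤ (-M) j ω} :=
        (measure_mono hsplit).trans (measure_union_le _ _)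
    _ ≤ _ + _ := add_le_add (measure_exists_le_le hmart h0 hbdd hvar hl hlc t)
        (measure_exists_le_le hmart.neg (by simp [h0]) hbdd_neg hvar_neg hl hlc t)
    _ = _ := by rw [← ENNReal.ofReal_add (by positivity) (by positivity), two_mul]

end Martingale

theorem freedman_inequality {Ω : Type*} {m0 : MeasurableSpace Ω} {μ : Measure Ω}
    [IsProbabilityMeasure μ] (ℱ : Filtration ℕ m0) (M : ℕ → Ω → ℝ)
    (hmart : Martingale M ℱ μ)
    (m : ℕ) (hm : 1 ≤ m) (β b : ℝ) (hβ : 0 < β) (hb : 0 < b)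
    (h0 : ∀ ω, M 0 ω = 0)
    (hbdd : ∀ i < m, ∀ᵐ ω ∂μ, |M (i + 1) ω - M i ω| ≤ 2 * β)
    (hvar : ∀ i < m, ∀ᵐ ω ∂μ,
      (μ[fun ω' => (M (i + 1) ω' - M i ω') ^ 2 | ℱ i]) ω ≤ β * b)
    (t : ℝ) (ht : 0 ≤ t) :
    μ {ω | ∃ j ≤ m, t ≤ |M j ω|}
      ≤ ENNReal.ofReal (2 * Real.exp (-t ^ 2 / (2 * m * β * b + 2 * β * t))) := by
  have hv : 0 < m * β * b := by
    have : (0 : ℝ) < m := by exact_mod_cast hm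
    positivity
  set l := t / (m * β * b + β * t)
  have hl : 0 ≤ l := by positivity
  have hlc : l * (2 * β) < 2 := by
    rw [div_mul_eq_mul_div, div_lt_iff₀ (by positivity)]
    linarith
  have hexponent : m * (l ^ 2 * (β * b) / (2 - l * (2 * β))) - l * t
      = -t ^ 2 / (2 * m * β * b + 2 * β * t) := by
    simp only [l]
    field_simp
    ring
  rw [← hexponent]
  exact measure_exists_le_abs_le hmart h0 hbdd hvar hl hlc t
end

section
/- Let Z_k count the indices 0 ≤ i < I (I a stopping time bounded by m) at which |Y_k(i+1) − Y_k(i)| > β, where conditionally P(|Y_k(i+1) − Y_k(i)| > β | F_i) ≤ γ for all i < I. Then Z_k is stochastically dominated by a Binomial(m, γ) random variable: P(Z_k ≥ s) ≤ P(Bin(m, γ) ≥ s) for all s. -/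
/-!
The number `N n` of large steps before time `n` grows at step `n` only on the event
`{n < I} ∩ {β < |Y (n+1) - Y n|}`. Since `I` is a stopping time, `{n < I}` is `ℱ n`-measurable,
so this event has conditional probability at most `γ` given `ℱ n`. Splitting `{N (n+1) ≥ t+1}`
according to whether `N n ≥ t + 1` or `N n = t` gives
`P(N (n+1) ≥ t+1) ≤ (1 - γ) P(N n ≥ t+1) + γ P(N n ≥ t)`,
which is Pascal's recursion for the tails of `Bin(n, γ)`; induction on `n` concludes.
-/

open MeasureTheory

open Finset in
noncomputable def binomialTail (n s : ℕ) (p : ℝ) : ℝ :=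
  ∑ j ∈ Icc s n, (n.choose j : ℝ) * p ^ j * (1 - p) ^ (n - j)

namespace binomialTail

open Finset

theorem nonneg {p : ℝ} (hp0 : 0 ≤ p) (hp1 : p ≤ 1) (n s : ℕ) : 0 ≤ binomialTail n s p :=
  sum_nonneg fun j _ => by
    have : 0 ≤ 1 - p := by linarith
    positivity

theorem zero_right (n : ℕ) (p : ℝ) : binomialTail n 0 p = 1 := by
  have hIcc : Icc 0 n = range (n + 1) := by ext; simp
  rw [binomialTail, hIcc]
  calc _ = (p + (1 - p)) ^ n := by rw [add_pow]; exact sum_congr rfl fun j _ => by ring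
    _ = 1 := by ring

theorem succ_succ (n t : ℕ) (p : ℝ) :
    binomialTail (n + 1) (t + 1) p
      = (1 - p) * binomialTail n (t + 1) p + p * binomialTail n t p := by
  set b : ℕ → ℝ := fun j => (n.choose j : ℝ) * p ^ j * (1 - p) ^ (n - j) with hb
  have pascal : ∀ k, ((n + 1).choose (k + 1) : ℝ) * p ^ (k + 1) * (1 - p) ^ (n + 1 - (k + 1))
      = p * b k + (1 - p) * b (k + 1) := by
    intro k
    rcases lt_or_ge n (k + 1) with hnk | hkn
    · simp [hb, Nat.choose_succ_succ, Nat.choose_eq_zero_of_lt hnk]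
      ring
    · have : n - k = n - (k + 1) + 1 := by omega
      simp only [hb, Nat.choose_succ_succ, Nat.add_sub_add_right, this]
      push_cast
      ring
  have top_vanishes : binomialTail n (t + 1) p = ∑ j ∈ Icc (t + 1) (n + 1), b j :=
    sum_subset (Icc_subset_Icc_right n.le_succ) fun j hj hj' => by
      have : n < j := by simp only [mem_Icc] at hj hj'; omega
      simp [Nat.choose_eq_zero_of_lt this]
  rw [top_vanishes, binomialTail, binomialTail, ← map_add_right_Icc t n 1, sum_map, sum_map]
  simp only [addRightEmbedding_apply, pascal, sum_add_distrib, ← mul_sum]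
  ring

end binomialTail

noncomputable def hitCount {Ω : Type*} (A : ℕ → Set Ω) (n : ℕ) (ω : Ω) : ℕ :=
  ∑ i ∈ Finset.range n, (A i).indicator 1 ω

section HitCount

variable {Ω : Type*} {m0 : MeasurableSpace Ω} {μ : Measure Ω} {ℱ : Filtration ℕ m0}
  {A : ℕ → Set Ω}

theorem hitCount_succ (n : ℕ) (ω : Ω) :
    hitCount A (n + 1) ω = hitCount A n ω + (A n).indicator 1 ω :=
  Finset.sum_range_succ _ _

theorem setOf_succ_le_hitCount_succ_subset (n t : ℕ) :
    {ω | t + 1 ≤ hitCount A (n + 1) ω}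
      ⊆ {ω | t + 1 ≤ hitCount A n ω} ∪ ({ω | hitCount A n ω = t} ∩ A n) := by
  intro ω hω
  rw [Set.mem_ofPred_eq, hitCount_succ] at hω
  by_cases hωA : ω ∈ A n
  · rw [Set.indicator_of_mem hωA, Pi.one_apply] at hω
    simp only [Set.mem_union, Set.mem_inter_iff, Set.mem_ofPred_eq, hωA, and_true]
    omega
  · rw [Set.indicator_of_notMem hωA, add_zero] at hω
    exact .inl hω

theorem measurable_hitCount (hA : ∀ i, MeasurableSet[ℱ (i + 1)] (A i)) (n : ℕ) :
    Measurable[ℱ n] (hitCount A n) :=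
  Finset.measurable_sum _ fun i hi =>
    measurable_const.indicator (ℱ.mono (Finset.mem_range.mp hi) _ (hA i))

theorem measure_le_hitCount_le_binomialTail [IsProbabilityMeasure μ] {p : ℝ} (hp0 : 0 ≤ p)
    (hp1 : p ≤ 1) (hA : ∀ i, MeasurableSet[ℱ (i + 1)] (A i))
    (hcond : ∀ n C, MeasurableSet[ℱ n] C → μ (C ∩ A n) ≤ ENNReal.ofReal p * μ C) (n s : ℕ) :
    μ {ω | s ≤ hitCount A n ω} ≤ ENNReal.ofReal (binomialTail n s p) := by
  induction n generalizing s with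
  | zero =>
    rcases s with _ | t
    · simp [binomialTail.zero_right]
    · simp [hitCount]
  | succ n ih =>
    rcases s with _ | t
    · simp [binomialTail.zero_right]
    have hEq : MeasurableSet[ℱ n] {ω | hitCount A n ω = t} :=
      measurable_hitCount hA n (measurableSet_singleton t)
    have hsplit : μ {ω | t + 1 ≤ hitCount A n ω} + μ {ω | hitCount A n ω = t}
        = μ {ω | t ≤ hitCount A n ω} := by
      rw [← measure_union _ (ℱ.le n _ hEq)]
      · congr 1; ext ω; simp only [Set.mem_union, Set.mem_ofPred_eq]; omega
      · exact Set.disjoint_left.mpr fun ω h1 h2 => by simp_all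
    have hpq : ENNReal.ofReal (1 - p) + ENNReal.ofReal p = 1 := by
      rw [← ENNReal.ofReal_add (by linarith) hp0]; simp
    calc μ {ω | t + 1 ≤ hitCount A (n + 1) ω}
        ≤ μ {ω | t + 1 ≤ hitCount A n ω} + μ ({ω | hitCount A n ω = t} ∩ A n) :=
          (measure_mono (setOf_succ_le_hitCount_succ_subset n t)).trans (measure_union_le _ _)
      _ ≤ μ {ω | t + 1 ≤ hitCount A n ω} + ENNReal.ofReal p * μ {ω | hitCount A n ω = t} := by
          gcongr; exact hcond n _ hEq
      _ = ENNReal.ofReal (1 - p) * μ {ω | t + 1 ≤ hitCount A n ω}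
            + ENNReal.ofReal p * μ {ω | t ≤ hitCount A n ω} := by
          rw [← hsplit, mul_add, ← add_assoc, ← add_mul, hpq, one_mul]
      _ ≤ ENNReal.ofReal (1 - p) * ENNReal.ofReal (binomialTail n (t + 1) p)
            + ENNReal.ofReal p * ENNReal.ofReal (binomialTail n t p) := by
          gcongr <;> apply ih
      _ = ENNReal.ofReal (binomialTail (n + 1) (t + 1) p) := by
          have hq0 : 0 ≤ 1 - p := by linarith
          rw [binomialTail.succ_succ, ENNReal.ofReal_add
            (mul_nonneg hq0 (binomialTail.nonneg hp0 hp1 _ _))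
            (mul_nonneg hp0 (binomialTail.nonneg hp0 hp1 _ _)),
            ENNReal.ofReal_mul hq0, ENNReal.ofReal_mul hp0]

end HitCount

theorem measure_inter_le_of_ae_condExp_indicator_le {Ω : Type*} {m m0 : MeasurableSpace Ω}
    {μ : Measure Ω} [IsFiniteMeasure μ] (hm : m ≤ m0) {A D : Set Ω} (hA : MeasurableSet A)
    (hD : MeasurableSet[m] D) {p : ℝ} (hp : 0 ≤ p)
    (h : ∀ᵐ ω ∂μ, ω ∈ D → μ[A.indicator (fun _ => (1 : ℝ)) | m] ω ≤ p) :
    μ (D ∩ A) ≤ ENNReal.ofReal p * μ D := by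
  have hint : Integrable (A.indicator fun _ => (1 : ℝ)) μ := (integrable_const 1).indicator hA
  have hreal : μ.real (D ∩ A) ≤ p * μ.real D :=
    calc μ.real (D ∩ A) = ∫ ω in D, A.indicator (fun _ => (1 : ℝ)) ω ∂μ := by
          rw [setIntegral_indicator hA, setIntegral_const, smul_eq_mul, mul_one]
      _ = ∫ ω in D, (μ[A.indicator (fun _ => (1 : ℝ)) | m]) ω ∂μ :=
          (setIntegral_condExp hm hint hD).symm
      _ ≤ ∫ ω in D, p ∂μ :=
          setIntegral_mono_ae_restrict integrable_condExp.integrableOn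
            (integrableOn_const (measure_ne_top _ _))
            ((ae_restrict_iff' (hm _ hD)).mpr h)
      _ = p * μ.real D := by rw [setIntegral_const, smul_eq_mul, mul_comm]
  rw [← ENNReal.ofReal_toReal (measure_ne_top μ D), ← ENNReal.ofReal_mul hp,
    ← ENNReal.ofReal_toReal (measure_ne_top μ (D ∩ A))]
  exact ENNReal.ofReal_le_ofReal hreal

theorem stochastic_domination_binomial_general {Ω : Type*} {m0 : MeasurableSpace Ω} {μ : Measure Ω}
    [IsProbabilityMeasure μ] (ℱ : Filtration ℕ m0)
    (Y : ℕ → Ω → ℝ) (hadapt : Adapted ℱ Y)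
    (m : ℕ) (I : Ω → ℕ) (hstop : IsStoppingTime ℱ (fun ω => (I ω : WithTop ℕ)))
    (β : ℝ) (γ : ℝ) (hγ0 : 0 ≤ γ) (hγ1 : γ ≤ 1)
    (hcond : ∀ i, ∀ᵐ ω ∂μ, i < I ω →
      (μ[Set.indicator {ω' | β < |Y (i + 1) ω' - Y i ω'|} (fun _ => (1 : ℝ)) | ℱ i]) ω ≤ γ)
    (Z : Ω → ℕ)
    (hZ : ∀ ω, Z ω = ((Finset.range m).filter
      (fun i => i < I ω ∧ β < |Y (i + 1) ω - Y i ω|)).card) :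
    ∀ s : ℕ, μ {ω | s ≤ Z ω}
      ≤ ENNReal.ofReal (∑ j ∈ Finset.Icc s m,
          (m.choose j : ℝ) * γ ^ j * (1 - γ) ^ (m - j)) := by
  set J : ℕ → Set Ω := fun i => {ω | β < |Y (i + 1) ω - Y i ω|}
  have hJ (i : ℕ) : MeasurableSet[ℱ (i + 1)] (J i) :=
    (measurable_abs.comp ((hadapt (i + 1)).sub ((hadapt i).mono (ℱ.mono i.le_succ) le_rfl)))
      measurableSet_Ioi
  have hI (i : ℕ) : MeasurableSet[ℱ i] {ω | i < I ω} := by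
    have : {ω | i < I ω} = {ω | (I ω : WithTop ℕ) ≤ i}ᶜ := by ext; simp
    exact this ▸ (hstop i).compl
  have hZ_eq : Z = hitCount (fun i => {ω | i < I ω} ∩ J i) m := by
    ext ω
    simp [hZ, hitCount, J, Set.indicator_apply, Finset.sum_boole]
  intro s
  rw [hZ_eq]
  refine measure_le_hitCount_le_binomialTail hγ0 hγ1
    (fun i => ((ℱ.mono i.le_succ) _ (hI i)).inter (hJ i)) (fun n C hC => ?_) m s
  rw [← Set.inter_assoc]
  refine (measure_inter_le_of_ae_condExp_indicator_le (ℱ.le n) (ℱ.le _ _ (hJ n))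
    (hC.inter (hI n)) hγ0 ?_).trans (by gcongr; exact Set.inter_subset_left)
  filter_upwards [hcond n] with ω hω hωD using hω hωD.2

theorem stochastic_domination_binomial {Ω : Type*} {m0 : MeasurableSpace Ω} {μ : Measure Ω}
    [IsProbabilityMeasure μ] (ℱ : Filtration ℕ m0)
    (Y : ℕ → Ω → ℝ) (hadapt : Adapted ℱ Y)
    (m : ℕ) (I : Ω → ℕ) (hstop : IsStoppingTime ℱ (fun ω => (I ω : WithTop ℕ))) (hIm : ∀ ω, I ω ≤ m)
    (β : ℝ) (hβ : 0 < β) (γ : ℝ) (hγ0 : 0 ≤ γ) (hγ1 : γ ≤ 1)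
    (hcond : ∀ i, ∀ᵐ ω ∂μ, i < I ω →
      (μ[Set.indicator {ω' | β < |Y (i + 1) ω' - Y i ω'|} (fun _ => (1 : ℝ)) | ℱ i]) ω ≤ γ)
    (Z : Ω → ℕ)
    (hZ : ∀ ω, Z ω = ((Finset.range m).filter
      (fun i => i < I ω ∧ β < |Y (i + 1) ω - Y i ω|)).card) :
    ∀ s : ℕ, μ {ω | s ≤ Z ω}
      ≤ ENNReal.ofReal (∑ j ∈ Finset.Icc s m,
          (m.choose j : ℝ) * γ ^ j * (1 - γ) ^ (m - j)) :=
  stochastic_domination_binomial_general ℱ Y hadapt m I hstop β γ hγ0 hγ1 hcond Z hZ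
end
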